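/- arXiv:1308.0549 — 3 statements merged into one kernel-verified Lean document; each statement's English description precedes it below -/
import Mathlib

section
/- Assume that the exponent δ of ψ satisfies δ > 1. Fix r > 1 and for each integer n ≥ 2 set s_n := φ(exp(n^r)) and b_n := log log φ⁻¹(s_n) / φ⁻¹(s_n). Then almost surely lim_{n → ∞} U_{b_{n+1}/r} / s_n = 0. -/
/-!
Pick `c > 1` and `Q > 0` from the definition of `δ`. Its inequality for the pair `v ≤ M v` gives
`ψ (M v) ≥ Q M^c ψ v`, so substituting `u = M v` in `φ t = ∫_t^∞ du / ψ u` yields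
`φ (M t) ≤ M^(1-c) φ t / Q`: for every `ε > 0` there is `M` with `φ⁻¹ (ε φ t) ≤ M t` for `t ≥ 1`.
Since `φ⁻¹ s_n = exp (n^r)`, we get `b_{n+1} / r = log (n+1) / exp ((n+1)^r)`, and therefore
`P (U_{b_{n+1}/r} > ε s_n) ≤ b_{n+1} φ⁻¹ (ε s_n) / r ≤ M log (n+1) exp (n^r - (n+1)^r)`,
which is at most `M n exp (-n^(r-1))` by Bernoulli's inequality and
summable because `r > 1`. Borel–Cantelli for each `ε = 1/(k+1)` concludes.
-/

open MeasureTheory Filter Set Topology Real Asymptotics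
open scoped ENNReal

lemma exists_mem_gt_of_lt_sSup {S : Set ℝ} {a : ℝ} (ha : 0 ≤ a) (h : a < sSup S) :
    ∃ c ∈ S, a < c :=
  exists_lt_of_lt_csSup (nonempty_iff_ne_empty.2 fun hS => by
    rw [hS, Real.sSup_empty] at h; linarith) h

lemma pos_of_strictAntiOn_of_nonneg {f : ℝ → ℝ} (hf : StrictAntiOn f (Ioi 0))
    (h0 : ∀ t, 0 < t → 0 ≤ f t) {t : ℝ} (ht : 0 < t) : 0 < f t :=
  (h0 (t + 1) (by linarith)).trans_lt (hf ht (mem_Ioi.2 (by linarith)) (by linarith))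

lemma setIntegral_Ioi_inv_nonneg {ψ : ℝ → ℝ} (hψpos : ∀ u : ℝ, 0 < u → 0 < ψ u) {t : ℝ}
    (ht : 0 ≤ t) : 0 ≤ ∫ u in Ioi t, (ψ u)⁻¹ :=
  setIntegral_nonneg measurableSet_Ioi fun u hu =>
    (inv_pos.2 (hψpos u (ht.trans_lt (mem_Ioi.1 hu)))).le

lemma pos_of_eq_setIntegral_Ioi_inv {ψ φ : ℝ → ℝ} (hψpos : ∀ u : ℝ, 0 < u → 0 < ψ u)
    (hφ : ∀ t : ℝ, 0 < t → φ t = ∫ u in Ioi t, (ψ u)⁻¹) (hφanti : StrictAntiOn φ (Ioi 0))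
    {t : ℝ} (ht : 0 < t) : 0 < φ t :=
  pos_of_strictAntiOn_of_nonneg hφanti
    (fun t ht => hφ t ht ▸ setIntegral_Ioi_inv_nonneg hψpos ht.le) ht

lemma mul_rpow_mul_le_of_comparison {ψ : ℝ → ℝ} {c Q : ℝ}
    (hcomp : ∀ u v : ℝ, 1 ≤ u → u ≤ v → Q * ψ u * u ^ (-c) ≤ ψ v * v ^ (-c))
    {M v : ℝ} (hM : 1 ≤ M) (hv : 1 ≤ v) : Q * M ^ c * ψ v ≤ ψ (M * v) := by
  have hv0 : 0 < v := by linarith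
  have hM0 : 0 < M := by linarith
  have h := hcomp v (M * v) hv (le_mul_of_one_le_left hv0.le hM)
  rw [mul_rpow hM0.le hv0.le, rpow_neg hM0.le, rpow_neg hv0.le] at h
  have hMc : 0 < M ^ c := rpow_pos_of_pos hM0 c
  have hvc : 0 < v ^ c := rpow_pos_of_pos hv0 c
  calc Q * M ^ c * ψ v = Q * ψ v * (v ^ c)⁻¹ * (M ^ c * v ^ c) := by field_simp
    _ ≤ ψ (M * v) * ((M ^ c)⁻¹ * (v ^ c)⁻¹) * (M ^ c * v ^ c) := by gcongr
    _ = ψ (M * v) := by field_simp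

lemma setIntegral_Ioi_mul_inv_le {ψ : ℝ → ℝ} {c Q : ℝ} (hQ : 0 < Q)
    (hψpos : ∀ u : ℝ, 0 < u → 0 < ψ u)
    (hcomp : ∀ u v : ℝ, 1 ≤ u → u ≤ v → Q * ψ u * u ^ (-c) ≤ ψ v * v ^ (-c))
    {M t : ℝ} (hM : 1 ≤ M) (ht : 1 ≤ t) (hint : IntegrableOn (fun u => (ψ u)⁻¹) (Ioi t)) :
    ∫ u in Ioi (M * t), (ψ u)⁻¹ ≤ M ^ (1 - c) / Q * ∫ u in Ioi t, (ψ u)⁻¹ := by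
  have hM0 : 0 < M := by linarith
  have hMc : 0 < M ^ c := rpow_pos_of_pos hM0 c
  rw [← integral_comp_mul_left_Ioi' _ _ hM0, smul_eq_mul]
  have hle : ∫ v in Ioi t, (ψ (M * v))⁻¹ ≤ ∫ v in Ioi t, (Q * M ^ c)⁻¹ * (ψ v)⁻¹ := by
    refine integral_mono_of_nonneg ?_ (hint.const_mul _) ?_
    · filter_upwards [ae_restrict_mem measurableSet_Ioi] with v hv
      exact (inv_pos.2 (hψpos _ (mul_pos hM0 (by linarith [mem_Ioi.1 hv])))).le
    · filter_upwards [ae_restrict_mem measurableSet_Ioi] with v hv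
      rw [← mul_inv]
      exact inv_anti₀ (mul_pos (mul_pos hQ hMc) (hψpos v (by linarith [mem_Ioi.1 hv])))
        (mul_rpow_mul_le_of_comparison hcomp hM (by linarith [mem_Ioi.1 hv]))
  calc M * ∫ v in Ioi t, (ψ (M * v))⁻¹ ≤ M * ∫ v in Ioi t, (Q * M ^ c)⁻¹ * (ψ v)⁻¹ := by gcongr
    _ = M ^ (1 - c) / Q * ∫ u in Ioi t, (ψ u)⁻¹ := by
      rw [integral_const_mul, rpow_sub hM0, rpow_one]; field_simp

lemma exists_setIntegral_Ioi_mul_inv_le {ψ : ℝ → ℝ} {c Q : ℝ} (hc : 1 < c) (hQ : 0 < Q)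
    (hψpos : ∀ u : ℝ, 0 < u → 0 < ψ u)
    (hcomp : ∀ u v : ℝ, 1 ≤ u → u ≤ v → Q * ψ u * u ^ (-c) ≤ ψ v * v ^ (-c))
    (hint : ∀ t : ℝ, 0 < t → IntegrableOn (fun u => (ψ u)⁻¹) (Ioi t)) {ε : ℝ} (hε : 0 < ε) :
    ∃ M : ℝ, 1 ≤ M ∧ ∀ t : ℝ, 1 ≤ t →
      ∫ u in Ioi (M * t), (ψ u)⁻¹ ≤ ε * ∫ u in Ioi t, (ψ u)⁻¹ := by
  have hlim : Tendsto (fun M : ℝ => M ^ (1 - c) / Q) atTop (𝓝 0) := by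
    simpa using (tendsto_rpow_neg_atTop (by linarith : 0 < c - 1)).div_const Q
  obtain ⟨M, hM1, hMε⟩ := ((eventually_ge_atTop 1).and (hlim.eventually (ge_mem_nhds hε))).exists
  refine ⟨M, hM1, fun t ht => ?_⟩
  exact (setIntegral_Ioi_mul_inv_le hQ hψpos hcomp hM1 ht (hint t (by linarith))).trans
    (mul_le_mul_of_nonneg_right hMε (setIntegral_Ioi_inv_nonneg hψpos (by linarith)))

lemma exists_φinv_mul_le_mul {ψ φ φinv : ℝ → ℝ} {c Q : ℝ} (hc : 1 < c) (hQ : 0 < Q)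
    (hψpos : ∀ u : ℝ, 0 < u → 0 < ψ u)
    (hcomp : ∀ u v : ℝ, 1 ≤ u → u ≤ v → Q * ψ u * u ^ (-c) ≤ ψ v * v ^ (-c))
    (hint : ∀ t : ℝ, 0 < t → IntegrableOn (fun u => (ψ u)⁻¹) (Ioi t))
    (hφ : ∀ t : ℝ, 0 < t → φ t = ∫ u in Ioi t, (ψ u)⁻¹) (hφanti : StrictAntiOn φ (Ioi 0))
    (hφinvpos : ∀ s : ℝ, 0 < s → 0 < φinv s) (hinvr : ∀ s : ℝ, 0 < s → φ (φinv s) = s)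
    {ε : ℝ} (hε : 0 < ε) : ∃ M : ℝ, 1 ≤ M ∧ ∀ t : ℝ, 1 ≤ t → φinv (ε * φ t) ≤ M * t := by
  obtain ⟨M, hM, hdecay⟩ := exists_setIntegral_Ioi_mul_inv_le hc hQ hψpos hcomp hint hε
  refine ⟨M, hM, fun t ht => ?_⟩
  have hεφ : 0 < ε * φ t := mul_pos hε (pos_of_eq_setIntegral_Ioi_inv hψpos hφ hφanti (by linarith))
  have hMt : 0 < M * t := by nlinarith
  rw [← hφanti.le_iff_ge hMt (hφinvpos _ hεφ), hinvr _ hεφ, hφ _ hMt, hφ t (by linarith)]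
  exact hdecay t ht

lemma rpow_add_rpow_sub_one_le_add_one_rpow {r m : ℝ} (hr : 1 ≤ r) (hm : 0 < m) :
    m ^ r + m ^ (r - 1) ≤ (m + 1) ^ r := by
  have hbern : 1 + r * m⁻¹ ≤ (1 + m⁻¹) ^ r :=
    one_add_mul_self_le_rpow_one_add (by linarith [inv_pos.2 hm]) hr
  have hsplit : (m + 1) ^ r = m ^ r * (1 + m⁻¹) ^ r := by
    rw [← mul_rpow hm.le (by positivity)]; field_simp
  have hmr : 0 ≤ m ^ (r - 1) := rpow_nonneg hm.le _
  rw [hsplit, rpow_sub_one hm.ne'] at *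
  calc m ^ r + m ^ r / m ≤ m ^ r + r * (m ^ r / m) := by nlinarith
    _ = m ^ r * (1 + r * m⁻¹) := by ring
    _ ≤ m ^ r * (1 + m⁻¹) ^ r := by gcongr

lemma log_div_exp_rpow_mul_exp_rpow_le {r m : ℝ} (hr : 1 ≤ r) (hm : 0 < m) :
    log (m + 1) / exp ((m + 1) ^ r) * exp (m ^ r) ≤ m * exp (-m ^ (r - 1)) := by
  have hlog : log (m + 1) ≤ m := by linarith [log_le_sub_one_of_pos (by linarith : 0 < m + 1)]
  rw [div_mul_eq_mul_div, mul_div_assoc, ← exp_sub]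
  exact mul_le_mul hlog (exp_le_exp.2 (by linarith [rpow_add_rpow_sub_one_le_add_one_rpow hr hm]))
    (exp_pos _).le hm.le

lemma summable_mul_exp_neg_rpow {α : ℝ} (hα : 0 < α) :
    Summable fun n : ℕ => (n : ℝ) * exp (-(n : ℝ) ^ α) := by
  have hexp : (fun x : ℝ => exp (-x ^ α)) =o[atTop] fun x => x ^ (-3 : ℝ) := by
    refine ((isLittleO_exp_neg_mul_rpow_atTop one_pos (-3 / α)).comp_tendsto
      (tendsto_rpow_atTop hα)).congr' (by simp [Function.comp_def]) ?_
    filter_upwards [eventually_ge_atTop 0] with x hx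
    simp only [Function.comp_apply, ← rpow_mul hx]
    field_simp
  have hmul : (fun x : ℝ => x * exp (-x ^ α)) =o[atTop] fun x => x ^ (-2 : ℝ) := by
    refine ((isBigO_refl id atTop).mul_isLittleO hexp).congr' (by simp) ?_
    filter_upwards [eventually_gt_atTop 0] with x hx
    rw [id, ← rpow_one_add' hx.le (by norm_num)]
    norm_num
  exact summable_of_isBigO_nat' (summable_nat_rpow.2 (by norm_num))
    (hmul.isBigO.comp_tendsto tendsto_natCast_atTop_atTop)

lemma measureReal_lt_le_of_measure_le_eq_exp_neg {Ω : Type*} [MeasurableSpace Ω] {P : Measure Ω}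
    [IsProbabilityMeasure P] {X : Ω → ℝ≥0∞} (hX : Measurable X) {t l : ℝ}
    (h : P {ω | X ω ≤ ENNReal.ofReal t} = ENNReal.ofReal (exp (-l))) :
    P.real {ω | ENNReal.ofReal t < X ω} ≤ l := by
  have hcompl : {ω | ENNReal.ofReal t < X ω} = {ω | X ω ≤ ENNReal.ofReal t}ᶜ := by
    ext ω; simp
  rw [hcompl, probReal_compl_eq_one_sub (measurableSet_le hX measurable_const), measureReal_def, h,
    ENNReal.toReal_ofReal (exp_pos _).le]
  linarith [add_one_le_exp (-l)]

lemma ae_eventually_notMem_of_summable {α : Type*} [MeasurableSpace α] {μ : Measure α}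
    [IsFiniteMeasure μ] {E : ℕ → Set α} {g : ℕ → ℝ} (hg : Summable g)
    (hE : ∀ᶠ n in atTop, μ.real (E n) ≤ g n) : ∀ᵐ x ∂μ, ∀ᶠ n in atTop, x ∉ E n := by
  have hsum : Summable fun n => μ.real (E n) :=
    hg.of_norm_bounded_eventually_nat
      (by simpa only [Real.norm_eq_abs, abs_of_nonneg measureReal_nonneg] using hE)
  refine ae_eventually_notMem ?_
  have htsum : ∑' n, μ (E n) = ENNReal.ofReal (∑' n, μ.real (E n)) := by
    simp [ENNReal.ofReal_tsum_of_nonneg (fun _ => measureReal_nonneg) hsum]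
  exact htsum ▸ ENNReal.ofReal_ne_top

lemma tendsto_div_ofReal_nhds_zero {X : ℕ → ℝ≥0∞} {s : ℕ → ℝ}
    (h : ∀ k : ℕ, ∀ᶠ n in atTop, X n ≤ ENNReal.ofReal (s n / (k + 1))) :
    Tendsto (fun n => X n / ENNReal.ofReal (s n)) atTop (𝓝 0) := by
  rw [ENNReal.tendsto_nhds_zero]
  intro ε hε
  obtain ⟨k, hk⟩ := ENNReal.exists_inv_nat_lt hε.ne'
  filter_upwards [h k] with n hn
  refine (ENNReal.div_le_of_le_mul ?_).trans
    ((ENNReal.inv_le_inv.2 (le_self_add : (k : ℝ≥0∞) ≤ k + 1)).trans hk.le)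
  rwa [div_eq_inv_mul, ENNReal.ofReal_mul (by positivity),
    ENNReal.ofReal_inv_of_pos (by positivity), ENNReal.ofReal_add (by positivity) zero_le_one,
    ENNReal.ofReal_natCast, ENNReal.ofReal_one] at hn

theorem negligible_last_passage_general
    (ψ : ℝ → ℝ)
    (hψpos : ∀ u : ℝ, 0 < u → 0 < ψ u)
    (hGrey : ∀ t : ℝ, 0 < t → IntegrableOn (fun u => (ψ u)⁻¹) (Set.Ioi t))
    (φ : ℝ → ℝ)
    (hφ : ∀ t : ℝ, 0 < t → φ t = ∫ u in Set.Ioi t, (ψ u)⁻¹)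
    (hφanti : StrictAntiOn φ (Set.Ioi 0))
    (φinv : ℝ → ℝ)
    (hφinvpos : ∀ s : ℝ, 0 < s → 0 < φinv s)
    (hinvl : ∀ t : ℝ, 0 < t → φinv (φ t) = t)
    (hinvr : ∀ s : ℝ, 0 < s → φ (φinv s) = s)
    (hδ : 1 < sSup {c : ℝ | 0 ≤ c ∧ ∃ Q : ℝ, 0 < Q ∧
      ∀ u v : ℝ, 1 ≤ u → u ≤ v → Q * ψ u * u ^ (-c) ≤ ψ v * v ^ (-c)})
    {Ω : Type*} [MeasurableSpace Ω] (P : Measure Ω) [IsProbabilityMeasure P]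
    (U : ℝ → Ω → ℝ≥0∞) (hUmeas : ∀ x : ℝ, Measurable (U x))
    (hUdist : ∀ x t : ℝ, 0 < x → 0 < t →
      P {ω | U x ω ≤ ENNReal.ofReal t} = ENNReal.ofReal (Real.exp (-x * φinv t)))
    (r : ℝ) (hr : 1 < r)
    (s' b' : ℕ → ℝ)
    (hs' : ∀ n : ℕ, s' n = φ (Real.exp ((n : ℝ) ^ r)))
    (hb' : ∀ n : ℕ, b' n = Real.log (Real.log (φinv (s' n))) / φinv (s' n)) :
    ∀ᵐ ω ∂P, Tendsto (fun n : ℕ => U (b' (n + 1) / r) ω / ENNReal.ofReal (s' n))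
      atTop (nhds 0) := by
  obtain ⟨c, ⟨-, Q, hQ, hcomp⟩, hc⟩ := exists_mem_gt_of_lt_sSup zero_le_one hδ
  have hs'pos : ∀ n, 0 < s' n := fun n =>
    hs' n ▸ pos_of_eq_setIntegral_Ioi_inv hψpos hφ hφanti (exp_pos _)
  have hb'r : ∀ n : ℕ, b' (n + 1) / r = log ((n : ℝ) + 1) / exp (((n : ℝ) + 1) ^ r) := fun n => by
    rw [hb', hs', hinvl _ (exp_pos _), log_exp, log_rpow (by positivity)]
    push_cast
    field_simp
  suffices hk : ∀ k : ℕ, ∀ᵐ ω ∂P, ∀ᶠ n in atTop,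
      ω ∉ {ω | ENNReal.ofReal (s' n / (k + 1)) < U (b' (n + 1) / r) ω} by
    filter_upwards [ae_all_iff.2 hk] with ω hω
    exact tendsto_div_ofReal_nhds_zero fun k => (hω k).mono fun n hn => not_lt.1 hn
  intro k
  obtain ⟨M, hM, hinv⟩ := exists_φinv_mul_le_mul hc hQ hψpos hcomp hGrey hφ hφanti hφinvpos hinvr
    (by positivity : (0 : ℝ) < ((k : ℝ) + 1)⁻¹)
  refine ae_eventually_notMem_of_summable
    ((summable_mul_exp_neg_rpow (by linarith : 0 < r - 1)).mul_left M) ?_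
  filter_upwards [eventually_ge_atTop 1] with n hn
  set x := log ((n : ℝ) + 1) / exp (((n : ℝ) + 1) ^ r)
  have hx : 0 < x := div_pos (log_pos (by norm_cast; omega)) (exp_pos _)
  have hεs : 0 < s' n / (k + 1) := by have := hs'pos n; positivity
  rw [hb'r]
  calc _ ≤ x * φinv (s' n / (k + 1)) :=
        measureReal_lt_le_of_measure_le_eq_exp_neg (hUmeas _) (by rw [hUdist _ _ hx hεs, neg_mul])
    _ ≤ x * (M * exp ((n : ℝ) ^ r)) := by
        gcongr
        simpa only [hs', div_eq_inv_mul] using hinv _ (one_le_exp (by positivity))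
    _ ≤ M * ((n : ℝ) * exp (-(n : ℝ) ^ (r - 1))) := by
        rw [mul_left_comm]
        exact mul_le_mul_of_nonneg_left (log_div_exp_rpow_mul_exp_rpow_le hr.le (by positivity))
          (by linarith)

theorem negligible_last_passage
    (ψ : ℝ → ℝ) (a b : ℝ) (hb : 0 ≤ b) (ν : Measure ℝ)
    (hνsupp : ν (Set.Iic 0) = 0)
    (hνint : ∫⁻ x, ENNReal.ofReal (min 1 (x ^ 2)) ∂ν ≠ ⊤)
    (hψform : ∀ l : ℝ, 0 ≤ l →
      ψ l = a * l + b * l ^ 2 +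
        ∫ x, (Real.exp (-l * x) - 1 + l * x * Set.indicator (Set.Iio 1) (fun _ => (1 : ℝ)) x) ∂ν)
    (hψpos : ∀ u : ℝ, 0 < u → 0 < ψ u)
    (hGrey : ∀ t : ℝ, 0 < t → IntegrableOn (fun u => (ψ u)⁻¹) (Set.Ioi t))
    (hdiv : ¬ IntegrableOn (fun u => (ψ u)⁻¹) (Set.Ioc 0 1))
    (φ : ℝ → ℝ)
    (hφ : ∀ t : ℝ, 0 < t → φ t = ∫ u in Set.Ioi t, (ψ u)⁻¹)
    (hφanti : StrictAntiOn φ (Set.Ioi 0))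
    (hφcont : ContinuousOn φ (Set.Ioi 0))
    (hφbij : Set.BijOn φ (Set.Ioi 0) (Set.Ioi 0))
    (φinv : ℝ → ℝ)
    (hφinvpos : ∀ s : ℝ, 0 < s → 0 < φinv s)
    (hinvl : ∀ t : ℝ, 0 < t → φinv (φ t) = t)
    (hinvr : ∀ s : ℝ, 0 < s → φ (φinv s) = s)
    (hδ : 1 < sSup {c : ℝ | 0 ≤ c ∧ ∃ Q : ℝ, 0 < Q ∧
      ∀ u v : ℝ, 1 ≤ u → u ≤ v → Q * ψ u * u ^ (-c) ≤ ψ v * v ^ (-c)})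
    {Ω : Type*} [MeasurableSpace Ω] (P : Measure Ω) [IsProbabilityMeasure P]
    (U : ℝ → Ω → ℝ≥0∞) (hUmeas : ∀ x : ℝ, Measurable (U x))
    (hUmono : ∀ ω : Ω, ∀ x y : ℝ, 0 < x → x ≤ y → U x ω ≤ U y ω)
    (hUdist : ∀ x t : ℝ, 0 < x → 0 < t →
      P {ω | U x ω ≤ ENNReal.ofReal t} = ENNReal.ofReal (Real.exp (-x * φinv t)))
    (r : ℝ) (hr : 1 < r)
    (s' b' : ℕ → ℝ)
    (hs' : ∀ n : ℕ, s' n = φ (Real.exp ((n : ℝ) ^ r)))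
    (hb' : ∀ n : ℕ, b' n = Real.log (Real.log (φinv (s' n))) / φinv (s' n)) :
    ∀ᵐ ω ∂P, Tendsto (fun n : ℕ => U (b' (n + 1) / r) ω / ENNReal.ofReal (s' n))
      atTop (nhds 0) :=
  negligible_last_passage_general ψ hψpos hGrey φ hφ hφanti φinv hφinvpos hinvl hinvr hδ P U hUmeas
    hUdist r hr s' b' hs' hb'
end

section
/- Let ψ : (0,∞) → (0,∞) be measurable with ∫_t^∞ du/ψ(u) < ∞ for every t > 0, and set φ(t) := ∫_t^∞ du/ψ(u). Suppose there exist c ∈ (1,∞) and C ∈ (0,∞) such that ψ(λ) ≤ C·ψ(λu)·u^{−c} for all u, λ ∈ [1,∞). Then for every t ≥ 1 and every ε with 0 < ε < min(C,1), one has ε·φ(t) ≥ φ((C/ε)^{1/(c−1)}·t). -/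
open MeasureTheory Filter Set Topology
open scoped ENNReal

theorem phi_scaling_inequality
    (ψ : ℝ → ℝ) (hψpos : ∀ u : ℝ, 0 < u → 0 < ψ u) (hψmeas : Measurable ψ)
    (hint : ∀ t : ℝ, 0 < t → IntegrableOn (fun u => (ψ u)⁻¹) (Set.Ioi t))
    (φ : ℝ → ℝ) (hφ : ∀ t : ℝ, 0 < t → φ t = ∫ u in Set.Ioi t, (ψ u)⁻¹)
    (c C : ℝ) (hc : 1 < c) (hC : 0 < C)
    (hineq : ∀ u lam : ℝ, 1 ≤ u → 1 ≤ lam → ψ lam ≤ C * ψ (lam * u) * u ^ (-c)) :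
    ∀ t : ℝ, 1 ≤ t → ∀ ε : ℝ, 0 < ε → ε < min C 1 →
      φ ((C / ε) ^ (1 / (c - 1)) * t) ≤ ε * φ t := by
  intro t ht ε hε hεlt
  have ht' : (0:ℝ) < t := lt_of_lt_of_le one_pos ht
  have hεC : ε < C := lt_of_lt_of_le hεlt (min_le_left _ _)
  have hCε : 1 < C / ε := (one_lt_div hε).2 hεC
  set a := (C / ε) ^ (1 / (c - 1)) with ha
  have hc1 : 0 < c - 1 := by linarith
  have ha1 : 1 < a := by
    rw [ha]
    exact (Real.one_lt_rpow_iff_of_pos (by positivity)).2 (Or.inl ⟨hCε, by positivity⟩)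
  have ha0 : 0 < a := lt_trans one_pos ha1
  have hapow : a ^ (c - 1) = C / ε := by
    rw [ha, ← Real.rpow_mul (by positivity), one_div_mul_cancel hc1.ne', Real.rpow_one]
  have hat : (0:ℝ) < a * t := by positivity
  -- change of variables
  have hcv : (∫ x in Set.Ioi t, (ψ (a * x))⁻¹) = a⁻¹ • ∫ u in Set.Ioi (a * t), (ψ u)⁻¹ :=
    integral_comp_mul_left_Ioi (fun u => (ψ u)⁻¹) t ha0
  -- pointwise bound
  have hpt : ∀ x ∈ Set.Ioi t, (ψ (a * x))⁻¹ ≤ C * a ^ (-c) * (ψ x)⁻¹ := by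
    intro x hx
    have hx1 : 1 ≤ x := le_of_lt (lt_of_le_of_lt ht hx)
    have hx0 : 0 < x := lt_of_lt_of_le one_pos hx1
    have h := hineq a x ha1.le hx1
    have hψx : 0 < ψ x := hψpos x hx0
    have hψax : 0 < ψ (x * a) := hψpos _ (by positivity)
    rw [mul_comm a x]
    rw [inv_le_iff_one_le_mul₀ hψax]
    have hac : (0:ℝ) < a ^ (-c) := Real.rpow_pos_of_pos ha0 _
    calc (1:ℝ) = ψ x * (ψ x)⁻¹ := (mul_inv_cancel₀ hψx.ne').symm
      _ ≤ (C * ψ (x * a) * a ^ (-c)) * (ψ x)⁻¹ := by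
          apply mul_le_mul_of_nonneg_right h (by positivity)
      _ = C * a ^ (-c) * (ψ x)⁻¹ * ψ (x * a) := by ring
  -- integral bound
  have hnonneg : ∀ᵐ x ∂(volume.restrict (Set.Ioi t)), 0 ≤ (ψ (a * x))⁻¹ := by
    filter_upwards [ae_restrict_mem measurableSet_Ioi] with x hx
    have hx0 : 0 < x := lt_trans ht' hx
    exact (inv_pos.2 (hψpos _ (by positivity))).le
  have hmono : (∫ x in Set.Ioi t, (ψ (a * x))⁻¹) ≤
      ∫ x in Set.Ioi t, C * a ^ (-c) * (ψ x)⁻¹ := by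
    apply integral_mono_of_nonneg hnonneg ((hint t ht').const_mul _)
    filter_upwards [ae_restrict_mem measurableSet_Ioi] with x hx
    exact hpt x hx
  have hconst : (∫ x in Set.Ioi t, C * a ^ (-c) * (ψ x)⁻¹)
      = C * a ^ (-c) * ∫ x in Set.Ioi t, (ψ x)⁻¹ := integral_const_mul _ _
  -- put together
  rw [hφ _ hat, hφ _ ht']
  have key : (∫ u in Set.Ioi (a * t), (ψ u)⁻¹) = a * ∫ x in Set.Ioi t, (ψ (a * x))⁻¹ := by
    rw [hcv, smul_eq_mul, ← mul_assoc, mul_inv_cancel₀ ha0.ne', one_mul]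
  rw [key]
  calc a * ∫ x in Set.Ioi t, (ψ (a * x))⁻¹
      ≤ a * (C * a ^ (-c) * ∫ x in Set.Ioi t, (ψ x)⁻¹) := by
        apply mul_le_mul_of_nonneg_left _ ha0.le
        rw [← hconst]; exact hmono
    _ = ε * ∫ x in Set.Ioi t, (ψ x)⁻¹ := by
        have h1 : a * a ^ (-c) = a ^ (1 - c) := by
          nth_rewrite 1 [← Real.rpow_one a]
          rw [← Real.rpow_add ha0, ← sub_eq_add_neg]
        have h2 : a ^ (1 - c) = (a ^ (c - 1))⁻¹ := by
          rw [← Real.rpow_neg ha0.le, neg_sub]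
        have h3 : a * (C * a ^ (-c)) = ε := by
          rw [mul_left_comm, h1, h2, hapow]
          field_simp
        rw [← mul_assoc, h3]
end

section
/- Let ψ : (0,∞) → (0,∞) be continuous, strictly positive, and regularly varying at ∞ with index α > 1 (i.e., ψ(kt)/ψ(t) → k^α as t → ∞ for every k > 0), and let W : [0,∞) → [0,∞) be a nondecreasing function with ∫_0^∞ e^{−λx} W(x) dx = 1/ψ(λ) for all λ > 0. Then hypothesis (H) holds: for every β ∈ (0,1), limsup_{x → 0+} W(βx)/W(x) < 1. -/
/-!
Karamata's Tauberian argument. The rescaled functions `t ↦ Γ(α+1) · x ψ(1/x) · W(x t)` have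
Laplace transforms `Γ(α+1) ψ(1/x) / ψ(s/x) → Γ(α+1) s^(-α)`, the transform of `α t^(α-1)`.
Since a continuous cutoff in the variable `e^(-t)` can be approximated by polynomials, convergence
of the transforms at `s = 1, 2, …` forces convergence of the integrals over `(0, b]`, so that
`∫₀ᵇ W(x t) dt` behaves like `b^α / (Γ(α+1) x ψ(1/x))` as `x → 0+`.
As `W` is monotone, `W(β x)` is at most the mean of `W(x ·)` over `[β, γ]` and `W(x)` at least its
mean over `[γ, 1]`; in the limit the quotient of these means is the quotient of two adjacent
slopes of the strictly convex function `t ↦ t^α`, which is `< 1`.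
-/

open MeasureTheory Filter Set Topology
open scoped ENNReal

open Real

noncomputable def laplace (f : ℝ → ℝ) (s : ℝ) : ℝ :=
  ∫ t in Ioi 0, exp (-s * t) * f t

structure NonnegLaplaceIntegrable (f : ℝ → ℝ) : Prop where
  nonneg : ∀ t, 0 < t → 0 ≤ f t
  integrableOn : ∀ s, 0 < s → IntegrableOn (fun t => exp (-s * t) * f t) (Ioi 0)

theorem laplace_const_mul_comp_mul_left (f : ℝ → ℝ) (c : ℝ) {x : ℝ} (hx : 0 < x) (s : ℝ) :
    laplace (fun t => c * f (x * t)) s = c * x⁻¹ * laplace f (s / x) := by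
  have h := integral_comp_mul_left_Ioi (fun t => exp (-(s / x) * t) * f t) 0 hx
  simp only [mul_zero, smul_eq_mul] at h
  rw [laplace, laplace, mul_assoc, ← h, ← integral_const_mul]
  congr 1 with t
  field_simp

theorem exp_neg_mul_eval_exp_neg (p : Polynomial ℝ) (t : ℝ) :
    exp (-t) * p.eval (exp (-t)) =
      ∑ k ∈ Finset.range (p.natDegree + 1), p.coeff k * exp (-(k + 1) * t) := by
  rw [Polynomial.eval_eq_sum_range, Finset.mul_sum]
  refine Finset.sum_congr rfl fun k _ => ?_
  rw [← exp_nat_mul, mul_left_comm, ← exp_add]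
  ring_nf

namespace NonnegLaplaceIntegrable

variable {f : ℝ → ℝ}

theorem of_laplace_ne_zero (hf : ∀ t, 0 < t → 0 ≤ f t)
    (h : ∀ s, 0 < s → laplace f s ≠ 0) : NonnegLaplaceIntegrable f where
  nonneg := hf
  integrableOn s hs := by
    by_contra hint
    exact h s hs (integral_undef hint)

theorem aestronglyMeasurable (hf : NonnegLaplaceIntegrable f) :
    AEStronglyMeasurable f (volume.restrict (Ioi 0)) := by
  refine (continuous_exp.aestronglyMeasurable.mul
    (hf.integrableOn 1 one_pos).aestronglyMeasurable).congr (Eventually.of_forall fun t => ?_)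
  show exp t * (exp (-1 * t) * f t) = f t
  rw [← mul_assoc, ← exp_add]
  simp

theorem integrableOn_mul {w : ℝ → ℝ} {C : ℝ} (hf : NonnegLaplaceIntegrable f)
    (hw : Continuous w) (hwC : ∀ t, 0 < t → |w t| ≤ C * exp (-t)) :
    IntegrableOn (fun t => w t * f t) (Ioi 0) := by
  refine ((hf.integrableOn 1 one_pos).const_mul C).mono'
    (hw.aestronglyMeasurable.mul hf.aestronglyMeasurable) ?_
  filter_upwards [self_mem_ae_restrict measurableSet_Ioi] with t ht
  rw [norm_mul, norm_eq_abs, norm_eq_abs, abs_of_nonneg (hf.nonneg t ht), ← mul_assoc,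
    neg_one_mul]
  exact mul_le_mul_of_nonneg_right (hwC t ht) (hf.nonneg t ht)

theorem integrableOn_Ioc (hf : NonnegLaplaceIntegrable f) (b : ℝ) :
    IntegrableOn f (Ioc 0 b) := by
  have h : IntegrableOn (fun t => exp (-1 * t) * f t) (Icc 0 b) :=
    (integrableOn_Icc_iff_integrableOn_Ioc).2 ((hf.integrableOn 1 one_pos).mono_set
      Ioc_subset_Ioi_self)
  refine ((h.continuousOn_mul continuous_exp.continuousOn isCompact_Icc).mono_set
    Ioc_subset_Icc_self).congr_fun (fun t _ => ?_) measurableSet_Ioc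
  show exp t * (exp (-1 * t) * f t) = f t
  rw [← mul_assoc, ← exp_add]
  simp

theorem const_mul_comp_mul_left (hf : NonnegLaplaceIntegrable f) {c x : ℝ} (hc : 0 ≤ c)
    (hx : 0 < x) : NonnegLaplaceIntegrable (fun t => c * f (x * t)) where
  nonneg t ht := mul_nonneg hc (hf.nonneg _ (mul_pos hx ht))
  integrableOn s hs := by
    have h : IntegrableOn (fun t => c * (exp (-(s / x) * (x * t)) * f (x * t))) (Ioi 0) :=
      ((integrableOn_Ioi_comp_mul_left_iff (fun t => exp (-(s / x) * t) * f t) 0 hx).2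
        (by simpa using hf.integrableOn (s / x) (div_pos hs hx))).const_mul c
    refine h.congr_fun (fun t _ => ?_) measurableSet_Ioi
    field_simp

theorem abs_integral_sub_sum_laplace_le (hf : NonnegLaplaceIntegrable f) {φ : ℝ → ℝ}
    (hφ : Continuous φ) {p : Polynomial ℝ} {ε : ℝ}
    (hp : ∀ v ∈ Icc (0 : ℝ) 1, |φ v - v * p.eval v| ≤ ε * v) :
    |(∫ t in Ioi 0, φ (exp (-t)) * f t) -
        ∑ k ∈ Finset.range (p.natDegree + 1), p.coeff k * laplace f (k + 1)| ≤
      ε * laplace f 1 := by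
  have hexp : ∀ t, 0 < t → exp (-t) ∈ Icc (0 : ℝ) 1 := fun t ht =>
    ⟨(exp_pos _).le, exp_le_one_iff.2 (by linarith)⟩
  have hterm : ∀ k : ℕ, IntegrableOn (fun t => p.coeff k * (exp (-(k + 1) * t) * f t)) (Ioi 0) :=
    fun k => (hf.integrableOn _ (by positivity)).const_mul _
  have hpoly : IntegrableOn (fun t => exp (-t) * p.eval (exp (-t)) * f t) (Ioi 0) := by
    simp_rw [exp_neg_mul_eval_exp_neg, Finset.sum_mul, mul_assoc]
    exact integrable_finsetSum _ fun k _ => hterm k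
  have hsum : ∑ k ∈ Finset.range (p.natDegree + 1), p.coeff k * laplace f (k + 1) =
      ∫ t in Ioi 0, exp (-t) * p.eval (exp (-t)) * f t := by
    simp_rw [exp_neg_mul_eval_exp_neg, Finset.sum_mul, mul_assoc]
    rw [integral_finsetSum _ fun k _ => hterm k]
    exact Finset.sum_congr rfl fun k _ => (integral_const_mul _ _).symm
  have hdiff : IntegrableOn (fun t => (φ (exp (-t)) - exp (-t) * p.eval (exp (-t))) * f t)
      (Ioi 0) :=
    hf.integrableOn_mul (by fun_prop) fun t ht => hp _ (hexp t ht)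
  have hφint : IntegrableOn (fun t => φ (exp (-t)) * f t) (Ioi 0) :=
    (hdiff.add hpoly).congr_fun (fun t _ => by simp only [Pi.add_apply]; ring)
      measurableSet_Ioi
  rw [hsum, ← integral_sub hφint hpoly, laplace]
  simp_rw [← sub_mul]
  rw [← norm_eq_abs, ← integral_const_mul]
  refine norm_integral_le_of_norm_le ((hf.integrableOn 1 one_pos).const_mul ε) ?_
  filter_upwards [self_mem_ae_restrict measurableSet_Ioi] with t ht
  rw [norm_mul, norm_eq_abs, norm_eq_abs, abs_of_nonneg (hf.nonneg t ht), ← mul_assoc,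
    neg_one_mul]
  exact mul_le_mul_of_nonneg_right (hp _ (hexp t ht)) (hf.nonneg t ht)

theorem integral_cutoff_mem_Icc (hf : NonnegLaplaceIntegrable f) {φ : ℝ → ℝ}
    (hφ : Continuous φ) (hφ01 : ∀ v, φ v ∈ Icc (0 : ℝ) 1) {b₁ b₂ : ℝ}
    (hφ1 : EqOn φ 1 (Ici (exp (-b₁)))) (hφ0 : EqOn φ 0 (Iic (exp (-b₂)))) :
    ∫ t in Ioi 0, φ (exp (-t)) * f t ∈ Icc (∫ t in Ioc 0 b₁, f t) (∫ t in Ioc 0 b₂, f t) := by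
  have hint : IntegrableOn (fun t => φ (exp (-t)) * f t) (Ioi 0) := by
    refine hf.integrableOn_mul (C := exp b₂) (by fun_prop) fun t _ => ?_
    rcases le_or_gt b₂ t with hbt | htb
    · rw [hφ0 (exp_le_exp.2 (neg_le_neg hbt)), Pi.zero_apply, abs_zero]
      positivity
    · calc |φ (exp (-t))| ≤ 1 := abs_le.2 ⟨by linarith [(hφ01 (exp (-t))).1], (hφ01 _).2⟩
        _ ≤ exp b₂ * exp (-t) := by rw [← exp_add]; exact one_le_exp (by linarith)
  constructor
  · calc ∫ t in Ioc 0 b₁, f t = ∫ t in Ioc 0 b₁, φ (exp (-t)) * f t := by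
          refine setIntegral_congr_fun measurableSet_Ioc fun t ht => ?_
          rw [hφ1 (exp_le_exp.2 (neg_le_neg ht.2)), Pi.one_apply, one_mul]
      _ ≤ ∫ t in Ioi 0, φ (exp (-t)) * f t := by
          refine setIntegral_mono_set hint ?_ Ioc_subset_Ioi_self.eventuallyLE
          filter_upwards [self_mem_ae_restrict measurableSet_Ioi] with t ht
          exact mul_nonneg (hφ01 _).1 (hf.nonneg t ht)
  · rw [setIntegral_eq_of_subset_of_forall_sdiff_eq_zero measurableSet_Ioi Ioc_subset_Ioi_self
      fun t ht => ?_]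
    · refine setIntegral_mono_on (hint.mono_set Ioc_subset_Ioi_self) (hf.integrableOn_Ioc b₂)
        measurableSet_Ioc fun t ht => ?_
      exact mul_le_of_le_one_left (hf.nonneg t ht.1) (hφ01 _).2
    · have hbt : b₂ < t := lt_of_not_ge fun h => ht.2 ⟨ht.1, h⟩
      rw [hφ0 (exp_le_exp.2 (by linarith)), Pi.zero_apply, zero_mul]

end NonnegLaplaceIntegrable

theorem continuous_div_self_of_eqOn_zero {φ : ℝ → ℝ} {c : ℝ} (hφ : Continuous φ) (hc : 0 < c)
    (hφ0 : EqOn φ 0 (Iic c)) : Continuous fun v => φ v / v := by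
  refine continuous_iff_continuousAt.2 fun v => ?_
  rcases lt_or_ge v c with hvc | hcv
  · refine (continuousAt_const (y := (0 : ℝ))).congr ?_
    filter_upwards [Iio_mem_nhds hvc] with w hw
    rw [hφ0 (mem_Iic.2 (le_of_lt hw)), Pi.zero_apply, zero_div]
  · exact hφ.continuousAt.div continuousAt_id (by linarith)

theorem exists_sum_laplace_approx {b₁ b₂ ε : ℝ} (hb : b₁ < b₂) (hε : 0 < ε) :
    ∃ (n : ℕ) (a : ℕ → ℝ), ∀ f, NonnegLaplaceIntegrable f →
      (∫ t in Ioc 0 b₁, f t) - ε * laplace f 1 ≤ ∑ k ∈ Finset.range n, a k * laplace f (k + 1) ∧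
      ∑ k ∈ Finset.range n, a k * laplace f (k + 1) ≤ (∫ t in Ioc 0 b₂, f t) + ε * laplace f 1 := by
  obtain ⟨φ, hφ0, hφ1, hφ01⟩ := exists_continuous_zero_one_of_isClosed isClosed_Iic isClosed_Ici
    (Iic_disjoint_Ici.2 (not_le.2 (exp_lt_exp.2 (neg_lt_neg hb))))
  have hφ0' : EqOn φ 0 (Iic (exp (-b₂))) := hφ0
  -- Approximating `φ v / v` rather than `φ v` makes the error `≤ ε e^(-t)`, integrable against `f`.
  obtain ⟨p, hp⟩ := exists_polynomial_near_of_continuousOn 0 1 (fun v => φ v / v)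
    (continuous_div_self_of_eqOn_zero φ.continuous (exp_pos _) hφ0').continuousOn ε hε
  have hp' : ∀ v ∈ Icc (0 : ℝ) 1, |φ v - v * p.eval v| ≤ ε * v := by
    intro v hv
    rcases hv.1.eq_or_lt with rfl | hv0
    · simp [hφ0' (exp_pos _).le]
    · rw [mul_comm ε]
      calc |φ v - v * p.eval v| = v * |p.eval v - φ v / v| := by
            rw [← abs_of_pos hv0, ← abs_mul, abs_of_pos hv0, ← abs_neg]
            congr 1
            field_simp
            ring
        _ ≤ v * ε := mul_le_mul_of_nonneg_left (hp v hv).le hv0.le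
  refine ⟨p.natDegree + 1, p.coeff, fun f hf => ?_⟩
  have hI := hf.integral_cutoff_mem_Icc φ.continuous hφ01 hφ1 hφ0'
  have hE := abs_le.1 (hf.abs_integral_sub_sum_laplace_le φ.continuous hp')
  constructor <;> linarith [hI.1, hI.2, hE.1, hE.2]

theorem tendsto_integral_Ioc_of_tendsto_laplace {ι : Type*} {l : Filter ι} {u : ι → ℝ → ℝ}
    {g : ℝ → ℝ} (hu : ∀ᶠ i in l, NonnegLaplaceIntegrable (u i)) (hg : NonnegLaplaceIntegrable g)
    (hlim : ∀ n : ℕ, Tendsto (fun i => laplace (u i) (n + 1)) l (𝓝 (laplace g (n + 1))))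
    {b : ℝ} (hG : ContinuousAt (fun c => ∫ t in Ioc 0 c, g t) b) :
    Tendsto (fun i => ∫ t in Ioc 0 b, u i t) l (𝓝 (∫ t in Ioc 0 b, g t)) := by
  set G := fun c => ∫ t in Ioc 0 c, g t
  have hM : 0 ≤ laplace g 1 := setIntegral_nonneg measurableSet_Ioi fun t ht =>
    mul_nonneg (exp_pos _).le (hg.nonneg t ht)
  have hlim1 : Tendsto (fun i => laplace (u i) 1) l (𝓝 (laplace g 1)) := by
    simpa using hlim 0
  have hsum : ∀ (n : ℕ) (a : ℕ → ℝ), Tendsto (fun i => ∑ k ∈ Finset.range n,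
      a k * laplace (u i) (k + 1)) l (𝓝 (∑ k ∈ Finset.range n, a k * laplace g (k + 1))) :=
    fun n a => tendsto_finsetSum _ fun k _ => (hlim k).const_mul _
  rw [tendsto_order]
  constructor
  · intro a ha
    obtain ⟨c, hac, hcb⟩ := ((hG.tendsto.mono_left (nhdsWithin_le_nhds (s := Iio b))).eventually
      (eventually_gt_nhds ha)).and self_mem_nhdsWithin |>.exists
    have hcb : c < b := hcb
    set ε := (G c - a) / (2 * (laplace g 1 + 1))
    have hε0 : 0 < ε := by positivity
    have hε : 2 * ε * (laplace g 1 + 1) = G c - a := by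
      simp only [ε]; field_simp
    obtain ⟨n, A, hA⟩ := exists_sum_laplace_approx hcb hε0
    have hlow : a < ∑ k ∈ Finset.range n, A k * laplace g (k + 1) - ε * laplace g 1 := by
      linarith [(hA g hg).1]
    filter_upwards [hu, ((hsum n A).sub (hlim1.const_mul ε)).eventually (eventually_gt_nhds hlow)]
      with i hui hi
    linarith [(hA (u i) hui).2]
  · intro a ha
    obtain ⟨c, hca, hbc⟩ := ((hG.tendsto.mono_left (nhdsWithin_le_nhds (s := Ioi b))).eventually
      (eventually_lt_nhds ha)).and self_mem_nhdsWithin |>.exists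
    have hbc : b < c := hbc
    set ε := (a - G c) / (2 * (laplace g 1 + 1))
    have hε0 : 0 < ε := by positivity
    have hε : 2 * ε * (laplace g 1 + 1) = a - G c := by
      simp only [ε]; field_simp
    obtain ⟨n, A, hA⟩ := exists_sum_laplace_approx hbc hε0
    have hup : ∑ k ∈ Finset.range n, A k * laplace g (k + 1) + ε * laplace g 1 < a := by
      linarith [(hA g hg).2]
    filter_upwards [hu, ((hsum n A).add (hlim1.const_mul ε)).eventually (eventually_lt_nhds hup)]
      with i hui hi
    linarith [(hA (u i) hui).1]

theorem nonnegLaplaceIntegrable_const_mul_rpow {α : ℝ} (hα : 0 < α) :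
    NonnegLaplaceIntegrable fun t => α * t ^ (α - 1) where
  nonneg t ht := by positivity
  integrableOn s hs := by
    refine IntegrableOn.congr_fun ((integrableOn_rpow_mul_exp_neg_mul_rpow (p := 1) (s := α - 1)
      (by linarith) one_pos hs).const_mul α) (fun t _ => ?_) measurableSet_Ioi
    simp only [rpow_one]
    ring_nf

theorem laplace_const_mul_rpow {α s : ℝ} (hα : 0 < α) (hs : 0 < s) :
    laplace (fun t => α * t ^ (α - 1)) s = Gamma (α + 1) * s ^ (-α) := by
  have h := integral_rpow_mul_exp_neg_mul_Ioi hα hs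
  rw [one_div, inv_rpow hs.le, ← rpow_neg hs.le] at h
  rw [laplace, Gamma_add_one hα.ne', mul_assoc, mul_comm (Gamma α), ← h, ← integral_const_mul]
  congr 1 with t
  ring_nf

theorem integral_Ioc_const_mul_rpow {α b : ℝ} (hα : 0 < α) (hb : 0 ≤ b) :
    ∫ t in Ioc 0 b, α * t ^ (α - 1) = b ^ α := by
  rw [← intervalIntegral.integral_of_le hb, intervalIntegral.integral_const_mul,
    integral_rpow (Or.inl (by linarith)), sub_add_cancel, zero_rpow hα.ne', sub_zero]
  field_simp

section Rescaling

variable {ψ W : ℝ → ℝ} {α : ℝ}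

theorem tendsto_laplace_rescale
    (hRV : ∀ k : ℝ, 0 < k → Tendsto (fun t => ψ (k * t) / ψ t) atTop (𝓝 (k ^ α)))
    (hWlaplace : ∀ s : ℝ, 0 < s → laplace W s = (ψ s)⁻¹) (c : ℝ) {s : ℝ} (hs : 0 < s) :
    Tendsto (fun x => laplace (fun t => c * (x * ψ x⁻¹) * W (x * t)) s) (𝓝[>] 0)
      (𝓝 (c * s ^ (-α))) := by
  have h := ((hRV s hs).comp tendsto_inv_nhdsGT_zero).inv₀ (rpow_pos_of_pos hs α).ne'
  rw [← rpow_neg hs.le] at h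
  refine (h.const_mul c).congr' ?_
  filter_upwards [self_mem_nhdsWithin] with x hx
  have hx : 0 < x := hx
  rw [laplace_const_mul_comp_mul_left _ _ hx, hWlaplace _ (div_pos hs hx), Function.comp_apply,
    div_eq_mul_inv s x]
  field_simp

theorem tendsto_intervalIntegral_rescale (hψpos : ∀ u : ℝ, 0 < u → 0 < ψ u) (hα : 0 < α)
    (hRV : ∀ k : ℝ, 0 < k → Tendsto (fun t => ψ (k * t) / ψ t) atTop (𝓝 (k ^ α)))
    (hWnonneg : ∀ x : ℝ, 0 ≤ x → 0 ≤ W x)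
    (hWlaplace : ∀ s : ℝ, 0 < s → laplace W s = (ψ s)⁻¹) {b : ℝ} (hb : 0 < b) :
    Tendsto (fun x => ∫ t in 0..b, Gamma (α + 1) * (x * ψ x⁻¹) * W (x * t)) (𝓝[>] 0)
      (𝓝 (b ^ α)) := by
  have hW : NonnegLaplaceIntegrable W := .of_laplace_ne_zero (fun t ht => hWnonneg t ht.le)
    fun s hs => by rw [hWlaplace s hs]; exact (inv_pos.2 (hψpos s hs)).ne'
  have hG : ContinuousAt (fun c => ∫ t in Ioc 0 c, α * t ^ (α - 1)) b := by
    refine (continuousAt_rpow_const b α (Or.inl hb.ne')).congr ?_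
    filter_upwards [Ioi_mem_nhds hb] with c hc
    exact (integral_Ioc_const_mul_rpow hα (le_of_lt hc)).symm
  simp_rw [intervalIntegral.integral_of_le hb.le]
  rw [← integral_Ioc_const_mul_rpow hα hb.le]
  refine tendsto_integral_Ioc_of_tendsto_laplace ?_ (nonnegLaplaceIntegrable_const_mul_rpow hα)
    (fun n => ?_) hG
  · filter_upwards [self_mem_nhdsWithin] with x (hx : 0 < x)
    exact hW.const_mul_comp_mul_left (by have := hψpos _ (inv_pos.2 hx); positivity) hx
  · rw [laplace_const_mul_rpow hα (by positivity)]
    exact tendsto_laplace_rescale hRV hWlaplace _ (by positivity)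

end Rescaling

theorem MonotoneOn.div_le_div_of_intervalIntegral {f : ℝ → ℝ} {x y z : ℝ}
    (hf : MonotoneOn f (Icc x z)) (hxy : x < y) (hyz : y < z) (hfx : 0 ≤ f x)
    (hpos : 0 < ∫ t in y..z, f t) :
    f x / f z ≤ ((∫ t in x..y, f t) / (y - x)) / ((∫ t in y..z, f t) / (z - y)) := by
  have hxy' : MonotoneOn f (uIcc x y) := hf.mono <| by
    rw [uIcc_of_le hxy.le]; exact Icc_subset_Icc_right hyz.le
  have hyz' : MonotoneOn f (uIcc y z) := hf.mono <| by
    rw [uIcc_of_le hyz.le]; exact Icc_subset_Icc_left hxy.le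
  have hlow : f x * (y - x) ≤ ∫ t in x..y, f t := by
    rw [mul_comm, ← smul_eq_mul, ← intervalIntegral.integral_const]
    exact intervalIntegral.integral_mono_on hxy.le intervalIntegrable_const hxy'.intervalIntegrable
      fun t ht => hf ⟨le_rfl, hxy.le.trans hyz.le⟩ ⟨ht.1, ht.2.trans hyz.le⟩ ht.1
  have hup : ∫ t in y..z, f t ≤ f z * (z - y) := by
    rw [mul_comm, ← smul_eq_mul, ← intervalIntegral.integral_const]
    exact intervalIntegral.integral_mono_on hyz.le hyz'.intervalIntegrable intervalIntegrable_const
      fun t ht => hf ⟨hxy.le.trans ht.1, ht.2⟩ ⟨hxy.le.trans hyz.le, le_rfl⟩ ht.2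
  have hlow' := (le_div_iff₀ (sub_pos.2 hxy)).2 hlow
  exact div_le_div₀ (hfx.trans hlow') hlow' (div_pos hpos (sub_pos.2 hyz))
    ((div_le_iff₀ (sub_pos.2 hyz)).2 hup)

theorem limsup_div_lt_one_of_tendsto_intervalIntegral {ι : Type*} {l : Filter ι} [l.NeBot]
    {v : ι → ℝ → ℝ} {α β : ℝ} (hα : 1 < α) (hβ0 : 0 < β) (hβ1 : β < 1)
    (hv : ∀ᶠ i in l, MonotoneOn (v i) (Ici 0) ∧ ∀ t, 0 ≤ t → 0 ≤ v i t)
    (hlim : ∀ b, 0 < b → Tendsto (fun i => ∫ t in 0..b, v i t) l (𝓝 (b ^ α))) :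
    limsup (fun i => v i β / v i 1) l < 1 := by
  obtain ⟨γ, hβγ, hγ1⟩ := exists_between hβ1
  have hγ0 : 0 < γ := hβ0.trans hβγ
  have hlim' : ∀ a b, 0 < a → 0 < b →
      Tendsto (fun i => ∫ t in a..b, v i t) l (𝓝 (b ^ α - a ^ α)) := by
    intro a b ha hb
    refine ((hlim b hb).sub (hlim a ha)).congr' ?_
    filter_upwards [hv] with i hvi
    have hint : ∀ c, 0 ≤ c → IntervalIntegrable (v i) volume 0 c := fun c hc =>
      (hvi.1.mono (by rw [uIcc_of_le hc]; exact Icc_subset_Ici_self)).intervalIntegrable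
    exact intervalIntegral.integral_interval_sub_left (hint b hb.le) (hint a ha.le)
  have hslope : (γ ^ α - β ^ α) / (γ - β) < (1 ^ α - γ ^ α) / (1 - γ) :=
    (strictConvexOn_rpow hα).slope_strict_mono_adjacent hβ0.le (mem_Ici.2 zero_le_one) hβγ hγ1
  have hden : 0 < (1 ^ α - γ ^ α) / (1 - γ) := lt_of_le_of_lt (div_nonneg (sub_nonneg.2
    (rpow_le_rpow hβ0.le hβγ.le (by linarith))) (sub_nonneg.2 hβγ.le)) hslope
  obtain ⟨r, hr, hr1⟩ := exists_between ((div_lt_one hden).2 hslope)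
  have hQ := ((hlim' β γ hβ0 hγ0).div_const (γ - β)).div
    ((hlim' γ 1 hγ0 one_pos).div_const (1 - γ)) hden.ne'
  refine lt_of_le_of_lt (limsup_le_of_le ?_ ?_) hr1
  · refine isCoboundedUnder_le_of_eventually_le l (x := 0) ?_
    filter_upwards [hv] with i hvi
    exact div_nonneg (hvi.2 β hβ0.le) (hvi.2 1 zero_le_one)
  · have hpos := (hlim' γ 1 hγ0 one_pos).eventually
      (eventually_gt_nhds (sub_pos.2 (rpow_lt_rpow hγ0.le hγ1 (by linarith))))
    filter_upwards [hv, hQ.eventually (eventually_lt_nhds hr), hpos] with i hvi hi hpi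
    refine le_trans ?_ hi.le
    exact (hvi.1.mono fun t ht => hβ0.le.trans ht.1).div_le_div_of_intervalIntegral hβγ hγ1
      (hvi.2 β hβ0.le) hpi

theorem hypothesis_H_holds_general
    (ψ : ℝ → ℝ) (hψpos : ∀ u : ℝ, 0 < u → 0 < ψ u)
    (α : ℝ) (hα : 1 < α)
    (hRV : ∀ k : ℝ, 0 < k → Tendsto (fun t => ψ (k * t) / ψ t) atTop (nhds (k ^ α)))
    (W : ℝ → ℝ) (hWnonneg : ∀ x : ℝ, 0 ≤ x → 0 ≤ W x)
    (hWmono : MonotoneOn W (Set.Ici 0))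
    (hWlaplace : ∀ lam : ℝ, 0 < lam →
      ∫ x in Set.Ioi (0 : ℝ), Real.exp (-lam * x) * W x = (ψ lam)⁻¹) :
    ∀ β : ℝ, 0 < β → β < 1 →
      Filter.limsup (fun x => W (β * x) / W x) (𝓝[>] (0 : ℝ)) < 1 := by
  intro β hβ0 hβ1
  have hc : ∀ x : ℝ, 0 < x → 0 < Gamma (α + 1) * (x * ψ x⁻¹) := fun x hx =>
    mul_pos (Gamma_pos_of_pos (by linarith)) (mul_pos hx (hψpos _ (inv_pos.2 hx)))
  have key := limsup_div_lt_one_of_tendsto_intervalIntegral (l := 𝓝[>] 0)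
    (v := fun x t => Gamma (α + 1) * (x * ψ x⁻¹) * W (x * t)) hα hβ0 hβ1 ?_
    fun b hb => tendsto_intervalIntegral_rescale hψpos (by linarith) hRV hWnonneg hWlaplace hb
  · refine (limsup_congr ?_).trans_lt key
    filter_upwards [self_mem_nhdsWithin] with x (hx : 0 < x)
    rw [mul_one, mul_comm β x, mul_div_mul_left _ _ (hc x hx).ne']
  · filter_upwards [self_mem_nhdsWithin] with x (hx : 0 < x)
    refine ⟨fun a ha b hb hab => ?_, fun t ht => ?_⟩
    · exact mul_le_mul_of_nonneg_left (hWmono (mul_nonneg hx.le ha) (mul_nonneg hx.le hb)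
        (mul_le_mul_of_nonneg_left hab hx.le)) (hc x hx).le
    · exact mul_nonneg (hc x hx).le (hWnonneg _ (mul_nonneg hx.le ht))

theorem hypothesis_H_holds
    (ψ : ℝ → ℝ) (hψpos : ∀ u : ℝ, 0 < u → 0 < ψ u)
    (hψcont : ContinuousOn ψ (Set.Ioi 0))
    (α : ℝ) (hα : 1 < α)
    (hRV : ∀ k : ℝ, 0 < k → Tendsto (fun t => ψ (k * t) / ψ t) atTop (nhds (k ^ α)))
    (W : ℝ → ℝ) (hWnonneg : ∀ x : ℝ, 0 ≤ x → 0 ≤ W x)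
    (hWmono : MonotoneOn W (Set.Ici 0))
    (hWlaplace : ∀ lam : ℝ, 0 < lam →
      ∫ x in Set.Ioi (0 : ℝ), Real.exp (-lam * x) * W x = (ψ lam)⁻¹) :
    ∀ β : ℝ, 0 < β → β < 1 →
      Filter.limsup (fun x => W (β * x) / W x) (𝓝[>] (0 : ℝ)) < 1 :=
  hypothesis_H_holds_general ψ hψpos α hα hRV W hWnonneg hWmono hWlaplace
end
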